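/- arXiv:1312.5615 — 2 statements merged into one kernel-verified Lean document; each statement's English description precedes it below -/
import Mathlib

section
/- Let G ≤ Aut(T) be a group of automorphisms of the regular p-adic rooted tree T such that G acts transitively on every level of T. If the rigid level stabilizer RStab_G(n) has finite index in G for every n, and G is finitely generated and torsion, then G is just infinite: every nontrivial normal subgroup of G has finite index. -/
/-- Vertices of the regular `p`-adic rooted tree: words over an alphabet of size `p`. -/
abbrev Vert (p : ℕ) := List (Fin p)

/-- Grafting: the automorphism of the tree acting as `g` on the subtree rooted at `u`
(under the natural identification of the subtree with the whole tree) and trivially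
elsewhere. -/
def graft {p : ℕ} (u : Vert p) (g : Equiv.Perm (Vert p)) : Equiv.Perm (Vert p) where
  toFun v := if u <+: v then u ++ g (v.drop u.length) else v
  invFun v := if u <+: v then u ++ g.symm (v.drop u.length) else v
  left_inv v := by
    by_cases h : u <+: v
    · simp only [h, if_pos, List.prefix_append, if_true, List.drop_left,
        Equiv.symm_apply_apply]
      exact (List.prefix_iff_eq_append.mp h)
    · simp [h]
  right_inv v := by
    by_cases h : u <+: v
    · simp only [h, if_pos, List.prefix_append, if_true, List.drop_left,
        Equiv.apply_symm_apply]
      exact (List.prefix_iff_eq_append.mp h)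
    · simp [h]

/-- The rigid vertex stabilizer of `u` in `G`: elements of `G` fixing every vertex
that does not have `u` as a prefix. -/
def rstab {p : ℕ} (G : Subgroup (Equiv.Perm (Vert p))) (u : Vert p) :
    Subgroup (Equiv.Perm (Vert p)) where
  carrier := {g | g ∈ G ∧ ∀ v : Vert p, ¬ u <+: v → g v = v}
  one_mem' := ⟨G.one_mem, fun v _ => rfl⟩
  mul_mem' := by
    rintro a b ⟨haG, ha⟩ ⟨hbG, hb⟩
    exact ⟨G.mul_mem haG hbG, fun v hv => by
      simp [Equiv.Perm.mul_apply, hb v hv, ha v hv]⟩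
  inv_mem' := by
    rintro a ⟨haG, ha⟩
    refine ⟨G.inv_mem haG, fun v hv => ?_⟩
    have := ha v hv
    calc a⁻¹ v = a⁻¹ (a v) := by rw [this]
    _ = v := by simp

/-- The rigid `n`-th level stabilizer: the subgroup generated by the rigid vertex
stabilizers of all vertices at level `n` (their internal product). -/
def rstabLevel {p : ℕ} (G : Subgroup (Equiv.Perm (Vert p))) (n : ℕ) :
    Subgroup (Equiv.Perm (Vert p)) :=
  ⨆ u ∈ {u : Vert p | u.length = n}, rstab G u

/-!
Level-transitivity puts `p ^ n` vertices in a single orbit for every `n`, so `G` is infinite.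
If `x ∈ N` moves a vertex `u` of level `n`, then conjugating `h ∈ RStab(u)` by `x` lands in
`RStab(x u)`, which commutes with `RStab(u)`; hence `⁅⁅x, h⁻¹⁆, k⁆ = ⁅h, k⁆` for `h, k ∈ RStab(u)`
and `⁅RStab(u), RStab(u)⁆ ≤ N`. Transitivity spreads this to every vertex of level `n`, and the
rigid stabilizers of distinct vertices commute, so `N` contains the derived subgroup of
`RStab(n)`. As `RStab(n)` has finite index, it is finitely generated and torsion, so its
abelianization is finite and its derived subgroup, hence `N`, has finite index.
-/

open scoped commutatorElement

namespace Subgroup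

variable {Γ : Type*} [Group Γ]

theorem commutator_le_of_commute_conj {N A : Subgroup Γ} [N.Normal] {x : Γ} (hx : x ∈ N)
    (hA : ∀ a ∈ A, ∀ b ∈ A, Commute (x * a * x⁻¹) b) : ⁅A, A⁆ ≤ N := by
  rw [commutator_le]
  intro h hh k hk
  have hN : ∀ y ∈ N, ∀ z : Γ, ⁅y, z⁆ ∈ N := fun y hy z =>
    commutator_le_left N ⊤ (commutator_mem_commutator hy (mem_top z))
  set b := x * h⁻¹ * x⁻¹
  have hbh : Commute b h := hA _ (inv_mem hh) _ hh
  have hbk : Commute b k := hA _ (inv_mem hh) _ hk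
  have hb : Commute b (h * k * h⁻¹) := (hbh.mul_right hbk).mul_right hbh.inv_right
  have key : ⁅⁅x, h⁻¹⁆, k⁆ = ⁅h, k⁆ := calc
    ⁅⁅x, h⁻¹⁆, k⁆ = b * (h * k * h⁻¹) * b⁻¹ * k⁻¹ := by simp only [b, commutatorElement_def]; group
    _ = ⁅h, k⁆ := by rw [hb.eq, commutatorElement_def]; group
  exact key ▸ hN _ (hN x hx _) k

theorem commutator_iSup_le {ι κ : Type*} {N : Subgroup Γ} [N.Normal] {A : ι → Subgroup Γ}
    {B : κ → Subgroup Γ} (h : ∀ i j, ⁅A i, B j⁆ ≤ N) : ⁅⨆ i, A i, ⨆ j, B j⁆ ≤ N := by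
  have hN {H K : Subgroup Γ} :
      ⁅H, K⁆ ≤ N ↔ H.map (QuotientGroup.mk' N) ≤ centralizer (K.map (QuotientGroup.mk' N)) := by
    rw [← commutator_eq_bot_iff_le_centralizer, ← map_commutator, map_eq_bot_iff,
      QuotientGroup.ker_mk']
  rw [hN, map_iSup, iSup_le_iff]
  intro i
  rw [le_centralizer_iff, map_iSup, iSup_le_iff]
  intro j
  rw [← le_centralizer_iff, ← hN]
  exact h i j

theorem iSup_subgroupOf {ι : Type*} {G : Subgroup Γ} {H : ι → Subgroup Γ} (hH : ∀ i, H i ≤ G) :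
    (⨆ i, H i).subgroupOf G = ⨆ i, (H i).subgroupOf G := by
  apply map_injective G.subtype_injective
  simp only [map_iSup, map_subgroupOf_eq_of_le (iSup_le hH), map_subgroupOf_eq_of_le (hH _)]

theorem finiteIndex_commutator_of_isMulTorsion [Group.FG Γ] (hΓ : IsMulTorsion Γ)
    (H : Subgroup Γ) [H.FiniteIndex] : (⁅H, H⁆ : Subgroup Γ).FiniteIndex := by
  have hsurj : Function.Surjective (Abelianization.of (G := H)) := Quot.mk_surjective
  have : Group.FG (Abelianization H) := Group.fg_of_surjective hsurj
  have : Finite (Abelianization H) :=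
    CommGroup.finite_of_fg_isMulTorsion _ ((hΓ.subgroup H).of_surjective hsurj)
  have hcomm : (_root_.commutator H).index ≠ 0 := Nat.card_ne_zero.mpr ⟨inferInstance, this⟩
  rw [← map_subtype_commutator]
  exact ⟨by rw [index_map_subtype]; exact mul_ne_zero hcomm FiniteIndex.index_ne_zero⟩

end Subgroup

section RigidStabilizers

variable {p : ℕ}

def PreservesChildren (g : Equiv.Perm (Vert p)) : Prop :=
  ∀ (v : Vert p) (x : Fin p), ∃ y : Fin p, g (v ++ [x]) = g v ++ [y]

namespace PreservesChildren

variable {g : Equiv.Perm (Vert p)} (hg : PreservesChildren g)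
include hg

theorem exists_apply_append (v w : Vert p) :
    ∃ t : Vert p, t.length = w.length ∧ g (v ++ w) = g v ++ t := by
  induction w using List.reverseRecOn with
  | nil => exact ⟨[], rfl, by simp⟩
  | append_singleton w x ih =>
    obtain ⟨t, ht, he⟩ := ih
    obtain ⟨y, hy⟩ := hg (v ++ w) x
    exact ⟨t ++ [y], by simp [ht], by rw [← List.append_assoc, hy, he, List.append_assoc]⟩

theorem isPrefix_apply {u v : Vert p} (h : u <+: v) : g u <+: g v := by
  obtain ⟨w, rfl⟩ := h
  obtain ⟨t, -, he⟩ := hg.exists_apply_append u w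
  exact he ▸ List.prefix_append _ _

theorem length_apply (v : Vert p) : (g v).length = (g []).length + v.length := by
  obtain ⟨t, ht, he⟩ := hg.exists_apply_append [] v
  rw [List.nil_append] at he
  rw [he, List.length_append, ht]

end PreservesChildren

variable {G : Subgroup (Equiv.Perm (Vert p))}

theorem length_apply_of_mem (hG : ∀ g ∈ G, PreservesChildren g) {g : Equiv.Perm (Vert p)}
    (hg : g ∈ G) (v : Vert p) : (g v).length = v.length := by
  have hroot := (hG _ (G.inv_mem hg)).length_apply (g [])
  rw [Equiv.Perm.coe_inv, Equiv.symm_apply_apply, List.length_nil] at hroot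
  rw [(hG g hg).length_apply]
  omega

theorem rstab_le (u : Vert p) : rstab G u ≤ G := fun _ ha => ha.1

theorem List.eq_of_prefix_of_prefix_of_length_eq {α : Type*} {u w v : List α} (hu : u <+: v)
    (hw : w <+: v) (hl : u.length = w.length) : u = w :=
  (List.prefix_of_prefix_length_le hu hw hl.le).eq_of_length hl

theorem commute_of_mem_rstab {u w : Vert p} (hl : u.length = w.length) (huw : u ≠ w)
    {a b : Equiv.Perm (Vert p)} (ha : a ∈ rstab G u) (hb : b ∈ rstab G w) : Commute a b :=
  Equiv.Perm.Disjoint.commute fun v => by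
    by_cases hu : u <+: v
    · exact Or.inr (hb.2 v fun hw => huw (List.eq_of_prefix_of_prefix_of_length_eq hu hw hl))
    · exact Or.inl (ha.2 v hu)

theorem conj_mem_rstab (hG : ∀ g ∈ G, PreservesChildren g) {g : Equiv.Perm (Vert p)} (hg : g ∈ G)
    {u : Vert p} {a : Equiv.Perm (Vert p)} (ha : a ∈ rstab G u) : g * a * g⁻¹ ∈ rstab G (g u) := by
  refine ⟨G.mul_mem (G.mul_mem hg ha.1) (G.inv_mem hg), fun v hv => ?_⟩
  have hu : ¬ u <+: g⁻¹ v := fun h => hv (by simpa using (hG g hg).isPrefix_apply h)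
  rw [Equiv.Perm.mul_apply, Equiv.Perm.mul_apply, ha.2 _ hu, Equiv.Perm.coe_inv,
    Equiv.apply_symm_apply]

theorem commutator_rstab_subgroupOf_le (hG : ∀ g ∈ G, PreservesChildren g) {N : Subgroup G}
    [N.Normal] {x : G} (hx : x ∈ N) {u : Vert p} (hxu : (x : Equiv.Perm (Vert p)) u ≠ u) :
    ⁅(rstab G u).subgroupOf G, (rstab G u).subgroupOf G⁆ ≤ N := by
  refine Subgroup.commutator_le_of_commute_conj hx fun a ha b hb => Submonoid.commute_coe_coe.mp ?_
  have hconj : ((x * a * x⁻¹ : G) : Equiv.Perm (Vert p)) ∈ rstab G ((x : Equiv.Perm (Vert p)) u) :=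
    conj_mem_rstab hG x.2 (Subgroup.mem_subgroupOf.mp ha)
  exact commute_of_mem_rstab (length_apply_of_mem hG x.2 u) hxu hconj
    (Subgroup.mem_subgroupOf.mp hb)

theorem rstabLevel_subgroupOf_eq_iSup (n : ℕ) : (rstabLevel G n).subgroupOf G =
    ⨆ u : {u : Vert p | u.length = n}, (rstab G u).subgroupOf G := by
  rw [rstabLevel, ← iSup_subtype'']
  exact Subgroup.iSup_subgroupOf fun u => rstab_le u.1

theorem commutator_rstabLevel_subgroupOf_le (hG : ∀ g ∈ G, PreservesChildren g)
    (htrans : ∀ u v : Vert p, u.length = v.length → ∃ g ∈ G, g u = v)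
    {N : Subgroup G} [hN : N.Normal] {x : G} (hx : x ∈ N) {u : Vert p}
    (hxu : (x : Equiv.Perm (Vert p)) u ≠ u) :
    ⁅(rstabLevel G u.length).subgroupOf G, (rstabLevel G u.length).subgroupOf G⁆ ≤ N := by
  rw [rstabLevel_subgroupOf_eq_iSup]
  refine Subgroup.commutator_iSup_le fun ⟨v, hv⟩ ⟨w, hw⟩ => ?_
  by_cases hvw : v = w
  · subst hvw
    obtain ⟨g, hg, rfl⟩ := htrans u v hv.symm
    refine commutator_rstab_subgroupOf_le hG (hN.conj_mem x hx ⟨g, hg⟩) ?_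
    simpa using hxu
  · refine Subgroup.commutator_le.mpr fun a ha b hb => ?_
    have hab : Commute a b := Submonoid.commute_coe_coe.mp <| commute_of_mem_rstab
      (hv.trans hw.symm) hvw (Subgroup.mem_subgroupOf.mp ha) (Subgroup.mem_subgroupOf.mp hb)
    exact hab.commutator_eq ▸ N.one_mem

theorem infinite_of_isLevelTransitive (hp : 1 < p) (hG : ∀ g ∈ G, PreservesChildren g)
    (htrans : ∀ u v : Vert p, u.length = v.length → ∃ g ∈ G, g u = v) : Infinite G := by
  by_contra hfin
  rw [not_infinite_iff_finite] at hfin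
  set n := Nat.card G
  let root : List.Vector (Fin p) n := List.Vector.replicate n ⟨0, by omega⟩
  let f : G → List.Vector (Fin p) n := fun g =>
    ⟨g.1 root.1, (length_apply_of_mem hG g.2 _).trans root.2⟩
  have hsurj : Function.Surjective f := by
    rintro ⟨v, hv⟩
    obtain ⟨g, hg, rfl⟩ := htrans root.1 v (root.2.trans hv.symm)
    exact ⟨⟨g, hg⟩, rfl⟩
  have hcard := Nat.card_le_card_of_surjective f hsurj
  rw [Nat.card_eq_fintype_card, card_vector, Fintype.card_fin] at hcard
  exact (Nat.lt_pow_self hp).not_ge hcard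

end RigidStabilizers

/-- A group `G` of automorphisms of the regular `p`-adic rooted
tree acting transitively on every level, whose rigid level stabilizers all have
finite index, and which is finitely generated and torsion, is just infinite:
it is infinite and every nontrivial normal subgroup has finite index. -/
theorem stmt10 (p : ℕ) (hp : p.Prime) (G : Subgroup (Equiv.Perm (Vert p)))
    (htree : ∀ g ∈ G, ∀ (v : Vert p) (x : Fin p), ∃ y : Fin p,
      g (v ++ [x]) = g v ++ [y])
    (htrans : ∀ u v : Vert p, u.length = v.length → ∃ g ∈ G, g u = v)
    (hrs : ∀ n : ℕ, (rstabLevel G n).relIndex G ≠ 0)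
    (hfg : Group.FG G) (htor : ∀ g : G, IsOfFinOrder g) :
    Infinite G ∧ ∀ N : Subgroup G, N.Normal → N ≠ ⊥ → N.index ≠ 0 := by
  refine ⟨infinite_of_isLevelTransitive hp.one_lt htree htrans, fun N hN hN_ne_bot => ?_⟩
  obtain ⟨⟨x, hxN⟩, hx⟩ := Subgroup.ne_bot_iff_exists_ne_one.mp hN_ne_bot
  obtain ⟨u, hxu⟩ : ∃ u : Vert p, (x : Equiv.Perm (Vert p)) u ≠ u :=
    not_forall.mp fun h => hx (Subtype.ext (Subtype.ext (Equiv.ext h)))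
  set L := (rstabLevel G u.length).subgroupOf G
  have hL : L.FiniteIndex := ⟨hrs u.length⟩
  have hL' : (⁅L, L⁆ : Subgroup G).FiniteIndex :=
    Subgroup.finiteIndex_commutator_of_isMulTorsion htor L
  have hLN : ⁅L, L⁆ ≤ N := commutator_rstabLevel_subgroupOf_le htree htrans hxN hxu
  exact (Subgroup.finiteIndex_of_le hLN).index_ne_zero
end

section
/- Let G be a level-transitive subgroup of Aut(T) for the regular p-adic rooted tree T, and let N be a subgroup of G such that ψ_1(N) ⊇ N × ⋯ × N (p copies). Then for every vertex u of T, the restriction of the rigid vertex stabilizer RStab_G(u) to the subtree T_u contains N (under the natural identification of T_u with T), i.e. N ⊆ RStab_G(u)_u. -/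

lemma graft_cons {p : ℕ} (x : Fin p) (u : Vert p) (n : Equiv.Perm (Vert p)) :
    graft (x :: u) n = graft [x] (graft u n) := by
  refine Equiv.ext fun v => ?_
  cases v with
  | nil =>
    simp only [graft, Equiv.coe_fn_mk]
    rw [if_neg (by simp), if_neg (by simp)]
  | cons y w =>
    simp only [graft, Equiv.coe_fn_mk]
    by_cases hxy : x = y
    · subst hxy
      by_cases hu : u <+: w
      · rw [if_pos (by simp [List.cons_prefix_cons, hu]),
          if_pos (by simp [List.cons_prefix_cons])]
        simp [graft, hu]
      · rw [if_neg (by simp [List.cons_prefix_cons, hu]),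
          if_pos (by simp [List.cons_prefix_cons])]
        simp [graft, hu]
    · rw [if_neg (by simp [List.cons_prefix_cons, hxy]),
        if_neg (by simp [List.cons_prefix_cons, hxy])]

/-- Let `G` be a level-transitive group of automorphisms of the
regular `p`-adic tree and `N ≤ G` a subgroup such that
`ψ₁(N) ⊇ N × ⋯ × N`, i.e. the graft of any element of `N` at any first-level
vertex again lies in `N`.  Then, by induction on the level, the copy of `N` at
any vertex `u` is contained in the rigid vertex stabilizer of `u`:
`N ⊆ RStab_G(u)_u` for every vertex `u`. -/
theorem stmt12 (p : ℕ) (hp : p.Prime) (G : Subgroup (Equiv.Perm (Vert p)))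
    (htree : ∀ g ∈ G, ∀ (v : Vert p) (x : Fin p), ∃ y : Fin p,
      g (v ++ [x]) = g v ++ [y])
    (htrans : ∀ u v : Vert p, u.length = v.length → ∃ g ∈ G, g u = v)
    (N : Subgroup (Equiv.Perm (Vert p))) (hNG : N ≤ G)
    (hpsi : ∀ n ∈ N, ∀ x : Fin p, graft [x] n ∈ N) :
    ∀ u : Vert p, ∀ n ∈ N, graft u n ∈ rstab G u := by
  have key : ∀ u : Vert p, ∀ n ∈ N, graft u n ∈ N := by
    intro u
    induction u with
    | nil =>
      intro n hn
      have h : graft ([] : Vert p) n = n := by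
        refine Equiv.ext fun v => ?_; simp [graft]
      rw [h]; exact hn
    | cons x u ih =>
      intro n hn
      rw [graft_cons]
      exact hpsi _ (ih n hn) x
  intro u n hn
  refine ⟨hNG (key u n hn), fun v hv => ?_⟩
  simp [graft, hv]
end
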